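/- arXiv:math/0312118 — 2 statements merged into one kernel-verified Lean document; each statement's English description precedes it below -/
import Mathlib

section
/- Let A be a unital *-algebra over C = R(i), ω a positive linear functional with Gelfand ideal J_ω = {a : ω(a*a)=0}. Then on the quotient H_ω = A/J_ω the formula ⟨[a],[b]⟩ := ω(a*b) defines a well-defined positive-definite sesquilinear inner product, and π_ω(a)[b] := [ab] defines a *-representation of A on the pre-Hilbert space H_ω (the GNS construction). -/
/-- The ring `C = R(i)` obtained from an ordered ring `R` by adjoining `i` with `i² = -1`. -/
@[ext]
structure Cx (R : Type*) where
  re : R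
  im : R

namespace Cx

variable {R : Type*} [CommRing R] [LinearOrder R] [IsStrictOrderedRing R]

instance : Zero (Cx R) := ⟨⟨0, 0⟩⟩
instance : One (Cx R) := ⟨⟨1, 0⟩⟩
instance : Add (Cx R) := ⟨fun z w => ⟨z.re + w.re, z.im + w.im⟩⟩
instance : Neg (Cx R) := ⟨fun z => ⟨-z.re, -z.im⟩⟩
instance : Mul (Cx R) :=
  ⟨fun z w => ⟨z.re * w.re - z.im * w.im, z.re * w.im + z.im * w.re⟩⟩

@[simp] lemma zero_re : (0 : Cx R).re = 0 := rfl
@[simp] lemma zero_im : (0 : Cx R).im = 0 := rfl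
@[simp] lemma one_re : (1 : Cx R).re = 1 := rfl
@[simp] lemma one_im : (1 : Cx R).im = 0 := rfl
@[simp] lemma add_re (z w : Cx R) : (z + w).re = z.re + w.re := rfl
@[simp] lemma add_im (z w : Cx R) : (z + w).im = z.im + w.im := rfl
@[simp] lemma neg_re (z : Cx R) : (-z).re = -z.re := rfl
@[simp] lemma neg_im (z : Cx R) : (-z).im = -z.im := rfl
@[simp] lemma mul_re (z w : Cx R) : (z * w).re = z.re * w.re - z.im * w.im := rfl
@[simp] lemma mul_im (z w : Cx R) : (z * w).im = z.re * w.im + z.im * w.re := rfl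

instance : CommRing (Cx R) where
  add := (· + ·)
  add_assoc a b c := by ext <;> simp <;> ring
  zero := 0
  zero_add a := by ext <;> simp
  add_zero a := by ext <;> simp
  add_comm a b := by ext <;> simp <;> ring
  neg := Neg.neg
  neg_add_cancel a := by ext <;> simp
  mul := (· * ·)
  mul_assoc a b c := by ext <;> simp <;> ring
  one := 1
  one_mul a := by ext <;> simp
  mul_one a := by ext <;> simp
  left_distrib a b c := by ext <;> simp <;> ring
  right_distrib a b c := by ext <;> simp <;> ring
  zero_mul a := by ext <;> simp
  mul_zero a := by ext <;> simp
  mul_comm a b := by ext <;> simp <;> ring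
  nsmul := nsmulRec
  zsmul := zsmulRec

/-- Conjugation `a + i b ↦ a - i b` as the star operation on `C = R(i)`. -/
instance : StarRing (Cx R) where
  star z := ⟨z.re, -z.im⟩
  star_involutive z := by ext <;> simp
  star_mul z w := by ext <;> simp <;> ring
  star_add z w := by ext <;> simp <;> ring

@[simp] lemma star_re (z : Cx R) : (star z).re = z.re := rfl
@[simp] lemma star_im (z : Cx R) : (star z).im = -z.im := rfl

/-- The canonical embedding `R → R(i)`. -/
def ofR : R →+* Cx R where
  toFun r := ⟨r, 0⟩
  map_one' := rfl
  map_mul' r s := by ext <;> simp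
  map_zero' := rfl
  map_add' r s := by ext <;> simp

instance : Algebra R (Cx R) := (ofR : R →+* Cx R).toAlgebra

/-- `i ∈ R(i)`. -/
def I : Cx R := ⟨0, 1⟩

lemma I_mul_I : (I : Cx R) * I = -1 := by ext <;> simp [I]

/-- Positivity in `C = R(i)`: a real element with positive real part. -/
def pos (z : Cx R) : Prop := 0 < z.re ∧ z.im = 0

/-- Nonnegativity in `C = R(i)`: a real element with nonnegative real part. -/
def nonneg (z : Cx R) : Prop := 0 ≤ z.re ∧ z.im = 0

end Cx

section StarAlgebra

/- `A` is a `*`-algebra over `C = R(i)`: an associative `C`-algebra with a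
`C`-antilinear involution (`star (c • a) = star c • star a`). -/
variable {R : Type*} [CommRing R] [LinearOrder R] [IsStrictOrderedRing R]
variable {A : Type*} [Ring A] [StarRing A] [Algebra (Cx R) A] [StarModule (Cx R) A]

/-- A `C`-linear functional `ω : A → C` is *positive* if `ω(a* a) ≥ 0` for all `a`. -/
def IsPositiveFunctional (ω : A →ₗ[Cx R] Cx R) : Prop :=
  ∀ a : A, (ω (star a * a)).nonneg

/-!
Positivity of `ω` makes `(a, b) ↦ ω(a* b)` a positive semidefinite form. Polarizing with the
scalars `1` and `i` shows it is Hermitian, and a Cauchy–Schwarz argument shows that its null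
vectors `ω(a* a) = 0` are exactly its radical. Hence the form descends to a positive-definite
one on the quotient by the radical. The radical is a left ideal, so left multiplication descends
too, and `ω((a b)* c) = ω(b* (a* c))` says that `π(a*)` is the adjoint of `π(a)`.
-/

namespace Cx

lemma eq_zero_of_mul_self_add_mul_self_eq_zero {z : Cx R} (h : z.re * z.re + z.im * z.im = 0) :
    z = 0 := by
  have hre : z.re * z.re = 0 := by nlinarith [mul_self_nonneg z.re, mul_self_nonneg z.im]
  have him : z.im * z.im = 0 := by nlinarith [mul_self_nonneg z.re, mul_self_nonneg z.im]
  ext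
  · exact mul_self_eq_zero.mp hre
  · exact mul_self_eq_zero.mp him

end Cx

namespace LinearMap

section Sesquilinear

variable {R : Type*} [CommRing R] {M : Type*} [AddCommGroup M] [Module (Cx R) M]
  {B : M →ₗ⋆[Cx R] M →ₗ[Cx R] Cx R}

variable (B) in
lemma apply_smul_add_smul_self (c d : Cx R) (x y : M) :
    B (c • x + d • y) (c • x + d • y) =
      star c * c * B x x + star c * d * B x y + star d * c * B y x + star d * d * B y y := by
  simp only [map_add, map_smulₛₗ, add_apply, smul_apply, smul_eq_mul, starRingEnd_apply,
    RingHom.id_apply]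
  ring

variable (B) in
/-- `B` descends to the quotient by `ker B.flip = {x | ∀ y, B y x = 0}`; reflexivity makes these
vectors null on the left as well. -/
def quotKerFlip (hB : B.IsRefl) :
    (M ⧸ ker B.flip) →ₗ⋆[Cx R] (M ⧸ ker B.flip) →ₗ[Cx R] Cx R :=
  (ker B.flip).liftQ ((ker B.flip).liftQ B.flip le_rfl).flip fun x hx => by
    refine Submodule.linearMap_qext _ (ext fun y => hB y x ?_)
    exact congr($(mem_ker.mp hx) y)

@[simp]
lemma quotKerFlip_mk (hB : B.IsRefl) (x y : M) :
    B.quotKerFlip hB (Submodule.Quotient.mk x) (Submodule.Quotient.mk y) = B x y :=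
  rfl

lemma quotKerFlip_isSymm (hB : B.IsSymm) : (B.quotKerFlip hB.isRefl).IsSymm := by
  refine ⟨fun x y => ?_⟩
  induction x using Submodule.Quotient.induction_on
  induction y using Submodule.Quotient.induction_on
  simpa using hB.eq _ _

variable [LinearOrder R] [IsStrictOrderedRing R]

lemma isSymm_of_nonneg (hB : ∀ x, (B x x).nonneg) : B.IsSymm := by
  refine ⟨fun x y => ?_⟩
  have hx := (hB x).2
  have hy := (hB y).2
  have hsum := (hB ((1 : Cx R) • x + (1 : Cx R) • y)).2
  have hrot := (hB ((1 : Cx R) • x + (Cx.I : Cx R) • y)).2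
  rw [apply_smul_add_smul_self] at hsum hrot
  simp only [star_one, mul_one, one_mul, Cx.add_im, Cx.I, Cx.mul_im, zero_mul, zero_add,
    Cx.star_re, Cx.star_im, neg_mul, Cx.mul_re, mul_zero, sub_neg_eq_add, add_zero] at hsum hrot
  ext
  · rw [starRingEnd_apply, Cx.star_re]
    linear_combination hrot - hx - hy
  · rw [starRingEnd_apply, Cx.star_im]
    linear_combination hx + hy - hsum

lemma apply_eq_zero_of_apply_self_eq_zero (hB : ∀ x, (B x x).nonneg) {x : M} (hx : B x x = 0)
    (y : M) : B y x = 0 := by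
  set z := B y x
  set r := (B y y).re
  set n := z.re * z.re + z.im * z.im
  have hxy : B x y = star z := ((isSymm_of_nonneg hB).eq y x).symm
  -- Testing positivity on `n • y - (r + 1) z̄ • x` gives `-n²(r + 2) ≥ 0` without dividing,
  -- which matters because `R` need not be a field or archimedean.
  have key := (hB ((⟨n, 0⟩ : Cx R) • y + (⟨-(r + 1), 0⟩ * star z) • x)).1
  rw [apply_smul_add_smul_self, hx, hxy] at key
  simp only [star_mul', star_star, Cx.add_re, Cx.mul_re, Cx.mul_im, Cx.star_re, Cx.star_im,
    mul_zero, add_zero, zero_add, zero_mul, sub_zero, neg_zero, mul_neg, neg_mul,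
    sub_neg_eq_add] at key
  have hn : n * n * (r + 2) ≤ 0 := by linear_combination key
  have hnn : n * n ≤ 0 := nonpos_of_mul_nonpos_left hn (by linarith [(hB y).1])
  exact Cx.eq_zero_of_mul_self_add_mul_self_eq_zero
    (mul_self_eq_zero.mp (le_antisymm hnn (mul_self_nonneg n)))

lemma mem_ker_flip_iff (hB : ∀ x, (B x x).nonneg) {x : M} : x ∈ ker B.flip ↔ B x x = 0 :=
  ⟨fun hx => congr($(mem_ker.mp hx) x),
    fun hx => ext (apply_eq_zero_of_apply_self_eq_zero hB hx)⟩

lemma quotKerFlip_apply_self_pos (hB : ∀ x, (B x x).nonneg) {x : M ⧸ ker B.flip}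
    (hx : x ≠ 0) :
    (B.quotKerFlip (isSymm_of_nonneg hB).isRefl x x).pos := by
  induction x using Submodule.Quotient.induction_on with | H x => ?_
  rw [ne_eq, Submodule.Quotient.mk_eq_zero, mem_ker_flip_iff hB] at hx
  refine ⟨(hB x).1.lt_of_ne fun h => hx ?_, (hB x).2⟩
  exact Cx.ext h.symm (hB x).2

end Sesquilinear

end LinearMap

section GNS

variable {R : Type*} [CommRing R]
variable {A : Type*} [Ring A] [StarRing A] [Algebra (Cx R) A] [StarModule (Cx R) A]
variable (ω : A →ₗ[Cx R] Cx R)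

def gnsForm : A →ₗ⋆[Cx R] A →ₗ[Cx R] Cx R :=
  LinearMap.mk₂'ₛₗ (starRingEnd (Cx R)) (RingHom.id (Cx R)) (fun a b => ω (star a * b))
    (fun a a' b => by rw [star_add, add_mul, map_add])
    (fun c a b => by rw [star_smul, smul_mul_assoc, map_smul, starRingEnd_apply, smul_eq_mul])
    (fun a b b' => by rw [mul_add, map_add])
    (fun c a b => by rw [mul_smul_comm, map_smul, RingHom.id_apply, smul_eq_mul])

@[simp]
lemma gnsForm_apply (a b : A) : gnsForm ω a b = ω (star a * b) :=
  rfl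

/-- Defined as the radical of `gnsForm ω`, so that it is a submodule for free; for positive `ω`,
`IsPositiveFunctional.mem_gnsIdeal_iff` identifies it with `{a | ω(a* a) = 0}`. -/
def gnsIdeal : Submodule (Cx R) A :=
  LinearMap.ker (gnsForm ω).flip

lemma mul_mem_gnsIdeal (a : A) {b : A} (hb : b ∈ gnsIdeal ω) : a * b ∈ gnsIdeal ω := by
  refine LinearMap.ext fun y => ?_
  have := congr($(LinearMap.mem_ker.mp hb) (star a * y))
  simpa [mul_assoc] using this

def gnsRep : A →ₐ[Cx R] Module.End (Cx R) (A ⧸ gnsIdeal ω) where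
  toFun a := (gnsIdeal ω).mapQ (gnsIdeal ω) (LinearMap.mulLeft (Cx R) a)
    fun _ => mul_mem_gnsIdeal ω a
  map_one' := Submodule.linearMap_qext _ (LinearMap.ext fun b => by simp)
  map_mul' a a' := Submodule.linearMap_qext _ <| LinearMap.ext fun b =>
    congrArg Submodule.Quotient.mk (mul_assoc a a' b)
  map_zero' := Submodule.linearMap_qext _ (LinearMap.ext fun b => by simp)
  map_add' a a' := Submodule.linearMap_qext _ <| LinearMap.ext fun b =>
    congrArg Submodule.Quotient.mk (add_mul a a' b)
  commutes' c := Submodule.linearMap_qext _ <| LinearMap.ext fun b =>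
    congrArg Submodule.Quotient.mk (Algebra.smul_def c b).symm

@[simp]
lemma gnsRep_mk (a b : A) :
    gnsRep ω a (Submodule.Quotient.mk b) = Submodule.Quotient.mk (a * b) :=
  rfl

end GNS

variable {ω : A →ₗ[Cx R] Cx R}

lemma IsPositiveFunctional.mem_gnsIdeal_iff (hω : IsPositiveFunctional ω) (a : A) :
    a ∈ gnsIdeal ω ↔ ω (star a * a) = 0 :=
  LinearMap.mem_ker_flip_iff (B := gnsForm ω) hω

lemma IsPositiveFunctional.gnsForm_isSymm (hω : IsPositiveFunctional ω) : (gnsForm ω).IsSymm :=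
  LinearMap.isSymm_of_nonneg (B := gnsForm ω) hω

variable (ω) in
def gnsInner (hω : IsPositiveFunctional ω) :
    (A ⧸ gnsIdeal ω) →ₗ⋆[Cx R] (A ⧸ gnsIdeal ω) →ₗ[Cx R] Cx R :=
  (gnsForm ω).quotKerFlip hω.gnsForm_isSymm.isRefl

@[simp]
lemma gnsInner_mk (hω : IsPositiveFunctional ω) (a b : A) :
    gnsInner ω hω (Submodule.Quotient.mk a) (Submodule.Quotient.mk b) = ω (star a * b) :=
  rfl

lemma gnsInner_gnsRep (hω : IsPositiveFunctional ω) (a : A) (x y : A ⧸ gnsIdeal ω) :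
    gnsInner ω hω (gnsRep ω a x) y = gnsInner ω hω x (gnsRep ω (star a) y) := by
  induction x using Submodule.Quotient.induction_on
  induction y using Submodule.Quotient.induction_on
  simp [mul_assoc]

/-- GNS construction. Let `A` be a unital `*`-algebra over
`C = R(i)` and `ω` a positive linear functional with Gelfand ideal
`J_ω = {a | ω(a* a) = 0}` (a `C`-submodule). On `H_ω = A / J_ω` the formula
`⟨[a],[b]⟩ := ω(a* b)` is a well-defined positive-definite sesquilinear inner
product, and `π(a)[b] := [a b]` is a well-defined unital `*`-representation of `A`
on the pre-Hilbert space `H_ω`, i.e. each `π(a)` is linear and adjointable with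
`π(a)* = π(a*)`, and `π` is multiplicative, linear and unital. -/
theorem gns_construction
    (ω : A →ₗ[Cx R] Cx R) (hω : IsPositiveFunctional ω) :
    ∃ J : Submodule (Cx R) A, (∀ a : A, a ∈ J ↔ ω (star a * a) = 0) ∧
    ∃ ip : (A ⧸ J) → (A ⧸ J) → Cx R,
      -- well-definedness of `⟨[a],[b]⟩ = ω(a* b)`
      (∀ a b : A, ip (Submodule.Quotient.mk a) (Submodule.Quotient.mk b)
          = ω (star a * b)) ∧
      -- sesquilinearity (linear in the second argument), Hermitian symmetry,
      -- positive definiteness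
      (∀ x y z : A ⧸ J, ip x (y + z) = ip x y + ip x z) ∧
      (∀ (c : Cx R) (x y : A ⧸ J), ip x (c • y) = c * ip x y) ∧
      (∀ x y : A ⧸ J, ip x y = star (ip y x)) ∧
      (∀ x : A ⧸ J, x ≠ 0 → (ip x x).pos) ∧
    ∃ π : A → (A ⧸ J) → (A ⧸ J),
      -- well-definedness of `π(a)[b] = [a b]`
      (∀ a b : A, π a (Submodule.Quotient.mk b) = Submodule.Quotient.mk (a * b)) ∧
      -- each `π(a)` is `C`-linear
      (∀ (a : A) (x y : A ⧸ J), π a (x + y) = π a x + π a y) ∧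
      (∀ (a : A) (c : Cx R) (x : A ⧸ J), π a (c • x) = c • π a x) ∧
      -- `π` is a unital algebra homomorphism
      (∀ a b : A, ∀ x, π (a * b) x = π a (π b x)) ∧
      (∀ a b : A, ∀ x, π (a + b) x = π a x + π b x) ∧
      (∀ (c : Cx R) (a : A) (x), π (c • a) x = c • π a x) ∧
      (∀ x, π 1 x = x) ∧
      -- `π(a)` is adjointable with adjoint `π(a*)`, so `π` is a `*`-homomorphism
      (∀ (a : A) (x y : A ⧸ J), ip (π a x) y = ip x (π (star a) y)) := by
  refine ⟨gnsIdeal ω, hω.mem_gnsIdeal_iff, fun x y => gnsInner ω hω x y, gnsInner_mk hω,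
    fun x => map_add (gnsInner ω hω x), fun c x => map_smul (gnsInner ω hω x) c,
    fun x y => ((LinearMap.quotKerFlip_isSymm hω.gnsForm_isSymm).eq y x).symm,
    fun _ => LinearMap.quotKerFlip_apply_self_pos (B := gnsForm ω) hω,
    fun a => gnsRep ω a, gnsRep_mk ω, fun a => map_add (gnsRep ω a),
    fun a => map_smul (gnsRep ω a), fun a b => LinearMap.congr_fun (map_mul (gnsRep ω) a b),
    fun a b => LinearMap.congr_fun (map_add (gnsRep ω) a b),
    fun c a => LinearMap.congr_fun (map_smul (gnsRep ω) c a),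
    LinearMap.congr_fun (map_one (gnsRep ω)), gnsInner_gnsRep hω⟩

end StarAlgebra
end

section
/- Let D be a *-algebra over C and H a right D-module. There is a bijection between D-valued inner products ⟨·,·⟩_D on H and (D,D)-bimodule maps Φ : H̄ ⊗_C H → D satisfying Φ(z)* = Φ(I(z)), given by ⟨x,y⟩_D = Φ(x̄ ⊗ y). Moreover, ⟨·,·⟩_D is completely positive if and only if Φ is completely positive. -/
open MulOpposite TensorProduct

section DModules

/- `D` is a `*`-algebra over `C = R(i)`; `H` is a right `D`-module (encoded as a
module over `Dᵐᵒᵖ`) with a compatible `C`-module structure. -/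
variable (R : Type*) [CommRing R] [LinearOrder R] [IsStrictOrderedRing R]
variable (D : Type*) [Ring D] [StarRing D] [Algebra (Cx R) D] [StarModule (Cx R) D]
variable (H : Type*) [AddCommGroup H] [Module (Cx R) H] [Module Dᵐᵒᵖ H]
  [SMulCommClass (Cx R) Dᵐᵒᵖ H]

/-- A `D`-valued inner product on the right `D`-module `H`: `C`-sesquilinear
(linear in the second argument), Hermitian, and right `D`-linear in the second
argument. -/
def IsDValuedIP (ip : H → H → D) : Prop :=
  (∀ x y z : H, ip x (y + z) = ip x y + ip x z) ∧
  (∀ (c : Cx R) (x y : H), ip x (c • y) = c • ip x y) ∧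
  (∀ x y : H, ip x y = star (ip y x)) ∧
  (∀ (d : D) (x y : H), ip x (op d • y) = ip x y * d)

/-- The complex conjugate module `H̄` of the right `D`-module `H`: the same
underlying abelian group with the twisted actions `c • x̄ = (x · conj c)‾` and
`d • x̄ = (x · d*)‾`, making it a left `D`-module. -/
def ConjMod (R D H : Type*) : Type _ := H

/-- The canonical identification `x ↦ x̄`, an additive `C`-antilinear bijection. -/
def toConj (R D H : Type*) : H → ConjMod R D H := id

/-- The inverse identification `x̄ ↦ x`. -/
def ofConj (R D H : Type*) : ConjMod R D H → H := id

instance : AddCommGroup (ConjMod R D H) := inferInstanceAs (AddCommGroup H)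

instance : Module (Cx R) (ConjMod R D H) where
  smul c x := toConj R D H (star c • ofConj R D H x)
  one_smul x := by
    show toConj R D H (star (1 : Cx R) • ofConj R D H x) = x
    rw [star_one, one_smul] <;> rfl
  mul_smul c c' x := by
    show toConj R D H (star (c * c') • ofConj R D H x) = _
    show _ = toConj R D H (star c • ofConj R D H (toConj R D H (star c' • ofConj R D H x)))
    rw [star_mul, mul_comm, mul_smul] <;> rfl
  smul_add c x y := by
    show toConj R D H (star c • (ofConj R D H x + ofConj R D H y)) = _
    rw [smul_add] <;> rfl
  smul_zero c := by
    show toConj R D H (star c • (0 : H)) = 0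
    rw [smul_zero] <;> rfl
  add_smul c c' x := by
    show toConj R D H (star (c + c') • ofConj R D H x) = _
    rw [star_add, add_smul] <;> rfl
  zero_smul x := by
    show toConj R D H (star (0 : Cx R) • ofConj R D H x) = 0
    rw [star_zero, zero_smul] <;> rfl

instance : Module D (ConjMod R D H) where
  smul d x := toConj R D H (op (star d) • ofConj R D H x)
  one_smul x := by
    show toConj R D H (op (star (1 : D)) • ofConj R D H x) = x
    rw [star_one, op_one, one_smul] <;> rfl
  mul_smul d d' x := by
    show toConj R D H (op (star (d * d')) • ofConj R D H x) = _
    show _ = toConj R D H (op (star d) • ofConj R D H (toConj R D H (op (star d') • ofConj R D H x)))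
    rw [star_mul, op_mul, mul_smul] <;> rfl
  smul_add d x y := by
    show toConj R D H (op (star d) • (ofConj R D H x + ofConj R D H y)) = _
    rw [smul_add] <;> rfl
  smul_zero d := by
    show toConj R D H (op (star d) • (0 : H)) = 0
    rw [smul_zero] <;> rfl
  add_smul d d' x := by
    show toConj R D H (op (star (d + d')) • ofConj R D H x) = _
    rw [star_add, op_add, add_smul] <;> rfl
  zero_smul x := by
    show toConj R D H (op (star (0 : D)) • ofConj R D H x) = 0
    rw [star_zero, op_zero, zero_smul] <;> rfl

instance : SMulCommClass (Cx R) D (ConjMod R D H) where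
  smul_comm c d x := by
    show toConj R D H (star c • ofConj R D H (toConj R D H (op (star d) • ofConj R D H x)))
      = toConj R D H (op (star d) • ofConj R D H (toConj R D H (star c • ofConj R D H x)))
    exact congrArg (toConj R D H) (smul_comm (star c) (op (star d)) (ofConj R D H x))

@[simp] lemma smul_conj_def (c : Cx R) (x : H) :
    c • toConj R D H x = toConj R D H (star c • x) := rfl

@[simp] lemma dsmul_conj_def (d : D) (x : H) :
    d • toConj R D H x = toConj R D H (op (star d) • x) := rfl

/-- `Mₙ(D)⁺`: the matrices on which every positive `C`-linear functional of the
`*`-algebra `Mₙ(D)` is nonnegative. -/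
def MatNonneg (R : Type*) [CommRing R] [LinearOrder R] [IsStrictOrderedRing R] (D : Type*) [Ring D]
    [StarRing D] [Algebra (Cx R) D] {n : ℕ} (M : Matrix (Fin n) (Fin n) D) : Prop :=
  ∀ Ω : Matrix (Fin n) (Fin n) D →ₗ[Cx R] Cx R,
    (∀ T : Matrix (Fin n) (Fin n) D, (Ω (star T * T)).nonneg) → (Ω M).nonneg

/-- Complete positivity of a `D`-valued inner product: all matrices
`(⟨xᵢ, xⱼ⟩)ᵢⱼ` lie in `Mₙ(D)⁺`. -/
def IsCompletelyPositiveIP (ip : H → H → D) : Prop :=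
  ∀ (n : ℕ) (x : Fin n → H),
    MatNonneg R D (Matrix.of fun i j => ip (x i) (x j))

/-- A Hermitian `(D,D)`-bimodule map `Φ : H̄ ⊗_C H → D`, i.e. `Φ(d·z·d') = d Φ(z) d'`
and `Φ(I z) = Φ(z)*` (expressed on pure tensors, which generate). -/
def IsHermitianBimoduleMap (Φ : ConjMod R D H ⊗[Cx R] H →ₗ[Cx R] D) : Prop :=
  (∀ (d : D) (x y : H),
    Φ ((d • toConj R D H x) ⊗ₜ[Cx R] y) = d * Φ (toConj R D H x ⊗ₜ[Cx R] y)) ∧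
  (∀ (d : D) (x y : H),
    Φ (toConj R D H x ⊗ₜ[Cx R] (op d • y)) = Φ (toConj R D H x ⊗ₜ[Cx R] y) * d) ∧
  (∀ x y : H, Φ (toConj R D H y ⊗ₜ[Cx R] x) = star (Φ (toConj R D H x ⊗ₜ[Cx R] y)))

/-- Complete positivity of `Φ`: `Φ`, applied entrywise, maps the wedge `Kₙ(E)`
generated by the matrices `(x̄ᵢ ⊗ xⱼ)ᵢⱼ` (and their convex combinations) into
`Mₙ(D)⁺`. -/
def IsCompletelyPositiveMap (Φ : ConjMod R D H ⊗[Cx R] H →ₗ[Cx R] D) : Prop :=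
  ∀ (n m : ℕ) (α : Fin m → R) (x : Fin m → Fin n → H), (∀ k, 0 < α k) →
    MatNonneg R D (Matrix.of fun i j =>
      Φ (∑ k, (Cx.ofR (α k) : Cx R) • (toConj R D H (x k i) ⊗ₜ[Cx R] x k j)))

end DModules

section Development

variable {R : Type*} [CommRing R]

namespace Cx

lemma nonneg_zero [LinearOrder R] : (0 : Cx R).nonneg := ⟨le_rfl, rfl⟩

variable [LinearOrder R] [IsStrictOrderedRing R]

lemma nonneg_add {z w : Cx R} (hz : z.nonneg) (hw : w.nonneg) : (z + w).nonneg :=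
  ⟨add_nonneg hz.1 hw.1, by simp [hz.2, hw.2]⟩

lemma nonneg_ofR_mul {a : R} (ha : 0 ≤ a) {z : Cx R} (hz : z.nonneg) :
    (ofR a * z).nonneg :=
  ⟨by simpa [ofR] using mul_nonneg ha hz.1, by simp [ofR, hz.2]⟩

end Cx

variable {D : Type*} [Ring D] [Algebra (Cx R) D]

lemma MatNonneg.sum_ofR_smul [LinearOrder R] [IsStrictOrderedRing R] [StarRing D] {n : ℕ}
    {ι : Type*} (s : Finset ι) {α : ι → R} (hα : ∀ k ∈ s, 0 ≤ α k) {M : ι → Matrix (Fin n) (Fin n) D}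
    (hM : ∀ k ∈ s, MatNonneg R D (M k)) :
    MatNonneg R D (∑ k ∈ s, Cx.ofR (α k) • M k) := by
  intro Ω hΩ
  rw [map_sum]
  refine Finset.sum_induction _ Cx.nonneg (fun _ _ => Cx.nonneg_add) Cx.nonneg_zero
    fun k hk => ?_
  rw [map_smul, smul_eq_mul]
  exact Cx.nonneg_ofR_mul (hα k hk) (hM k hk Ω hΩ)

variable {H : Type*} [AddCommGroup H] [Module (Cx R) H]

namespace IsDValuedIP

variable [StarRing D] [Module Dᵐᵒᵖ H] {ip : H → H → D}

lemma add_left (hip : IsDValuedIP R D H ip) (x y z : H) :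
    ip (x + y) z = ip x z + ip y z := by
  rw [hip.2.2.1, hip.1, star_add, ← hip.2.2.1, ← hip.2.2.1]

lemma smul_left [StarModule (Cx R) D] (hip : IsDValuedIP R D H ip) (c : Cx R) (x y : H) :
    ip (c • x) y = star c • ip x y := by
  rw [hip.2.2.1, hip.2.1, star_smul, ← hip.2.2.1]

lemma op_smul_left (hip : IsDValuedIP R D H ip) (d : D) (x y : H) :
    ip (op d • x) y = star d * ip x y := by
  rw [hip.2.2.1, hip.2.2.2, star_mul, ← hip.2.2.1]

def toConjBilin [StarModule (Cx R) D] (hip : IsDValuedIP R D H ip) :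
    ConjMod R D H →ₗ[Cx R] H →ₗ[Cx R] D :=
  LinearMap.mk₂ (Cx R) (fun x y => ip (ofConj R D H x) y) (fun x y z => hip.add_left x y z)
    (fun c x y =>
      (hip.smul_left (star c) (ofConj R D H x) y).trans (congrArg (· • _) (star_star c)))
    (fun x y z => hip.1 x y z) (fun c x y => hip.2.1 c x y)

end IsDValuedIP

variable (Φ : ConjMod R D H ⊗[Cx R] H →ₗ[Cx R] D)

theorem isDValuedIP_iff_isHermitianBimoduleMap [StarRing D] [Module Dᵐᵒᵖ H]
    [SMulCommClass (Cx R) Dᵐᵒᵖ H] :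
    IsDValuedIP R D H (fun x y => Φ (toConj R D H x ⊗ₜ[Cx R] y)) ↔
      IsHermitianBimoduleMap R D H Φ := by
  constructor
  · intro hip
    refine ⟨fun d x y => ?_, hip.2.2.2, fun x y => hip.2.2.1 y x⟩
    exact (hip.op_smul_left (star d) x y).trans (congrArg (· * _) (star_star d))
  · rintro ⟨-, hright, hherm⟩
    refine ⟨fun x y z => ?_, fun c x y => ?_, fun x y => hherm y x, hright⟩
    · simp only [tmul_add, map_add]
    · simp only [tmul_smul, map_smul]

lemma map_wedge_eq_sum_smul_gram {n m : ℕ} (α : Fin m → R) (x : Fin m → Fin n → H) :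
    (Matrix.of fun i j =>
        Φ (∑ k, (Cx.ofR (α k) : Cx R) • (toConj R D H (x k i) ⊗ₜ[Cx R] x k j))) =
      ∑ k, Cx.ofR (α k) • Matrix.of fun i j => Φ (toConj R D H (x k i) ⊗ₜ[Cx R] x k j) := by
  ext i j
  simp only [Matrix.of_apply, map_sum, map_smul, Matrix.sum_apply, Matrix.smul_apply]

theorem isCompletelyPositiveIP_iff_isCompletelyPositiveMap [LinearOrder R]
    [IsStrictOrderedRing R] [StarRing D] :
    IsCompletelyPositiveIP R D H (fun x y => Φ (toConj R D H x ⊗ₜ[Cx R] y)) ↔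
      IsCompletelyPositiveMap R D H Φ := by
  constructor
  · intro h n m α x hα
    rw [map_wedge_eq_sum_smul_gram]
    exact MatNonneg.sum_ofR_smul _ (fun k _ => (hα k).le) fun k _ => h n (x k)
  · intro h n x
    simpa [map_wedge_eq_sum_smul_gram] using h n 1 (fun _ => 1) (fun _ => x) fun _ => one_pos

end Development

section DModules

variable (R : Type*) [CommRing R] [LinearOrder R] [IsStrictOrderedRing R]
variable (D : Type*) [Ring D] [StarRing D] [Algebra (Cx R) D] [StarModule (Cx R) D]
variable (H : Type*) [AddCommGroup H] [Module (Cx R) H] [Module Dᵐᵒᵖ H]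
  [SMulCommClass (Cx R) Dᵐᵒᵖ H]

/-- For a right `D`-module `H`, `D`-valued inner products on `H`
correspond bijectively to Hermitian `(D,D)`-bimodule maps `Φ : H̄ ⊗_C H → D`, via
`⟨x,y⟩_D = Φ(x̄ ⊗ y)`; moreover the inner product is completely positive iff the
corresponding `Φ` is completely positive. -/
theorem inner_products_correspond_to_hermitian_bimodule_maps :
    -- every `D`-valued inner product is induced by a unique linear map `Φ`,
    (∀ ip : H → H → D, IsDValuedIP R D H ip →
      ∃! Φ : ConjMod R D H ⊗[Cx R] H →ₗ[Cx R] D,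
        ∀ x y : H, Φ (toConj R D H x ⊗ₜ[Cx R] y) = ip x y) ∧
    -- and any such `Φ` is a Hermitian bimodule map
    (∀ (ip : H → H → D) (Φ : ConjMod R D H ⊗[Cx R] H →ₗ[Cx R] D),
      IsDValuedIP R D H ip → (∀ x y : H, Φ (toConj R D H x ⊗ₜ[Cx R] y) = ip x y) →
      IsHermitianBimoduleMap R D H Φ) ∧
    -- conversely every Hermitian bimodule map induces a `D`-valued inner product
    (∀ Φ : ConjMod R D H ⊗[Cx R] H →ₗ[Cx R] D, IsHermitianBimoduleMap R D H Φ →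
      IsDValuedIP R D H (fun x y => Φ (toConj R D H x ⊗ₜ[Cx R] y))) ∧
    -- and complete positivity corresponds to complete positivity
    (∀ (ip : H → H → D) (Φ : ConjMod R D H ⊗[Cx R] H →ₗ[Cx R] D),
      IsDValuedIP R D H ip → (∀ x y : H, Φ (toConj R D H x ⊗ₜ[Cx R] y) = ip x y) →
      (IsCompletelyPositiveIP R D H ip ↔ IsCompletelyPositiveMap R D H Φ)) := by
  have form_eq {ip : H → H → D} {Φ : ConjMod R D H ⊗[Cx R] H →ₗ[Cx R] D}
      (hΦ : ∀ x y : H, Φ (toConj R D H x ⊗ₜ[Cx R] y) = ip x y) :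
      ip = fun x y => Φ (toConj R D H x ⊗ₜ[Cx R] y) :=
    funext₂ fun x y => (hΦ x y).symm
  refine ⟨fun ip hip => ⟨lift hip.toConjBilin, fun _ _ => rfl,
    fun Φ hΦ => TensorProduct.ext' fun x y => hΦ x y⟩, ?_,
    fun Φ => (isDValuedIP_iff_isHermitianBimoduleMap Φ).2, ?_⟩
  · rintro ip Φ hip hΦ
    obtain rfl := form_eq hΦ
    exact (isDValuedIP_iff_isHermitianBimoduleMap Φ).1 hip
  · rintro ip Φ - hΦ
    obtain rfl := form_eq hΦ
    exact isCompletelyPositiveIP_iff_isCompletelyPositiveMap Φ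
end DModules
end
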